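/- arXiv:1803.06271 — 11 statements merged into one kernel-verified Lean document; each statement's English description precedes it below -/
import Mathlib

section
/- Let (X, 𝒜) be a measurable space. (1) If I is a proper ideal of the ring M(X), then the family Z[I] = {Z(f) : f ∈ I} is a Z_𝒜-filter on X. (2) Conversely, if 𝓕 is a Z_𝒜-filter on X, then the set Z⁻¹[𝓕] = {f ∈ M(X) : Z(f) ∈ 𝓕} is a proper ideal of M(X). -/
open Set

/-- The ring of all real-valued measurable functions on a measurable space `X`,
as a subring of the pointwise ring `X → ℝ`. -/
def Mring (X : Type*) [MeasurableSpace X] : Subring (X → ℝ) where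
  carrier := {f | Measurable f}
  mul_mem' hf hg := hf.mul hg
  one_mem' := measurable_one
  add_mem' hf hg := hf.add hg
  zero_mem' := measurable_zero
  neg_mem' hf := hf.neg

/-- The zero-set of a measurable function. -/
def zset {X : Type*} [MeasurableSpace X] (f : Mring X) : Set X :=
  {x | (f : X → ℝ) x = 0}

/-- The cozero-set of a measurable function. -/
def coz {X : Type*} [MeasurableSpace X] (f : Mring X) : Set X :=
  {x | (f : X → ℝ) x ≠ 0}

/-- A `Z_𝒜`-filter on `X`: a proper filter of the lattice of measurable sets,
i.e. a nonempty collection of measurable sets not containing `∅`, closed under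
binary intersections, and containing every measurable superset of each member. -/
def IsZFilter {X : Type*} [MeasurableSpace X] (F : Set (Set X)) : Prop :=
  F.Nonempty ∧ (∀ A ∈ F, MeasurableSet A) ∧ ∅ ∉ F ∧
    (∀ A ∈ F, ∀ B ∈ F, A ∩ B ∈ F) ∧
    (∀ A ∈ F, ∀ B : Set X, MeasurableSet B → A ⊆ B → B ∈ F)

lemma zset_measurable {X : Type*} [MeasurableSpace X] (f : Mring X) :
    MeasurableSet (zset f) := by
  have : zset f = (f : X → ℝ) ⁻¹' {0} := by ext x; simp [zset]
  rw [this]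
  exact f.2 (measurableSet_singleton 0)

/-- (1) If `I` is a proper ideal of `M(X)`, then `Z[I] = {Z(f) : f ∈ I}` is a
`Z_𝒜`-filter on `X`.  (2) If `𝓕` is a `Z_𝒜`-filter on `X`, then
`Z⁻¹[𝓕] = {f ∈ M(X) : Z(f) ∈ 𝓕}` is a proper ideal of `M(X)`. -/
theorem stmt_2 {X : Type*} [MeasurableSpace X] :
    (∀ I : Ideal (Mring X), I ≠ ⊤ →
      IsZFilter {Z : Set X | ∃ f ∈ I, Z = zset f}) ∧
    (∀ F : Set (Set X), IsZFilter F →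
      ∃ I : Ideal (Mring X), I ≠ ⊤ ∧ ∀ f : Mring X, f ∈ I ↔ zset f ∈ F) := by
  constructor
  · intro I hI
    refine ⟨⟨zset 0, 0, I.zero_mem, rfl⟩, ?_, ?_, ?_, ?_⟩
    · rintro A ⟨f, hf, rfl⟩
      exact zset_measurable f
    · rintro ⟨f, hfI, hz⟩
      have hne : ∀ x, (f : X → ℝ) x ≠ 0 := by
        intro x hx
        have : x ∈ zset f := hx
        rw [← hz] at this
        exact this
      set g : Mring X := ⟨fun x => ((f : X → ℝ) x)⁻¹, f.2.inv⟩ with hg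
      apply hI
      rw [Ideal.eq_top_iff_one]
      have : f * g = 1 := by
        ext x
        simp [hg, mul_inv_cancel₀ (hne x)]
      rw [← this]
      exact I.mul_mem_right g hfI
    · rintro A ⟨f, hf, rfl⟩ B ⟨g, hg, rfl⟩
      refine ⟨f * f + g * g, I.add_mem (I.mul_mem_left f hf) (I.mul_mem_left g hg), ?_⟩
      ext x
      simp only [zset, mem_inter_iff, mem_setOf_eq]
      constructor
      · intro ⟨h1, h2⟩
        push_cast
        simp [h1, h2]
      · intro h
        have h' : (f : X → ℝ) x * (f : X → ℝ) x + (g : X → ℝ) x * (g : X → ℝ) x = 0 := by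
          have := h; push_cast at this; exact this
        constructor
        · nlinarith [mul_self_nonneg ((f : X → ℝ) x), mul_self_nonneg ((g : X → ℝ) x)]
        · nlinarith [mul_self_nonneg ((f : X → ℝ) x), mul_self_nonneg ((g : X → ℝ) x)]
    · rintro A ⟨f, hf, rfl⟩ B hB hsub
      set g : Mring X := ⟨Bᶜ.indicator 1, measurable_one.indicator hB.compl⟩ with hg
      refine ⟨f * g, I.mul_mem_right g hf, ?_⟩
      ext x
      simp only [zset, mem_setOf_eq]
      push_cast
      by_cases hx : x ∈ B
      · simp [hg, indicator_of_notMem (by simpa using hx : x ∉ Bᶜ), hx]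
      · have hfx : (f : X → ℝ) x ≠ 0 := fun h => hx (hsub h)
        simp [hg, indicator_of_mem (by simpa using hx : x ∈ Bᶜ), hfx, hx]
  · intro F hF
    obtain ⟨hne, hmeas, hempty, hinter, hup⟩ := hF
    have huniv : univ ∈ F := by
      obtain ⟨A, hA⟩ := hne
      exact hup A hA univ MeasurableSet.univ (subset_univ A)
    refine ⟨{ carrier := {f | zset f ∈ F}
              zero_mem' := by
                have : zset (0 : Mring X) = univ := by ext x; simp [zset]
                simpa [this] using huniv
              add_mem' := by
                intro f g hf hg
                refine hup _ (hinter _ hf _ hg) _ (zset_measurable _) ?_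
                rintro x ⟨h1, h2⟩
                show ((f + g : Mring X) : X → ℝ) x = 0
                push_cast
                simp only [Pi.add_apply]
                rw [show (f : X → ℝ) x = 0 from h1, show (g : X → ℝ) x = 0 from h2]
                ring
              smul_mem' := by
                intro c f hf
                refine hup _ hf _ (zset_measurable _) ?_
                intro x hx
                show ((c • f : Mring X) : X → ℝ) x = 0
                rw [smul_eq_mul]
                push_cast
                simp only [Pi.mul_apply]
                rw [show (f : X → ℝ) x = 0 from hx]
                ring }, ?_, fun f => Iff.rfl⟩
    rw [Ideal.ne_top_iff_one]
    intro h1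
    apply hempty
    have : zset (1 : Mring X) = ∅ := by ext x; simp [zset]
    rw [← this]
    exact h1
end

section
/- Let (X, 𝒜) be a measurable space and f, g ∈ M(X). The following are equivalent: (1) every maximal ideal of M(X) containing f also contains g; (2) Z(f) ⊆ Z(g); (3) Ann(f) ⊆ Ann(g). -/
/-!
A point `x` lies in `Z(f)` iff `f` lies in the maximal ideal `ker (eval x)`, which gives
(1) ⇒ (2). Conversely, if `Z(f) ⊆ Z(g)` then `g / f` (with
`r / 0 = 0`) is measurable and `g = f · (g / f)`, so `f ∣ g`; this yields both (1) and (3).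
Finally the indicator of `Z(f)` lies in `Ann(f)`, so under (3) it also annihilates `g`,
which is (2).
-/

open Set

namespace Mring

variable {X : Type*} [MeasurableSpace X]

def eval (x : X) : Mring X →+* ℝ :=
  (Pi.evalRingHom (fun _ => ℝ) x).comp (Mring X).subtype

theorem eval_surjective (x : X) : Function.Surjective (eval (X := X) x) :=
  fun r => ⟨⟨fun _ => r, measurable_const⟩, rfl⟩

theorem ker_eval_isMaximal (x : X) : (RingHom.ker (eval (X := X) x)).IsMaximal :=
  RingHom.ker_isMaximal_of_surjective _ (eval_surjective x)

theorem mem_ker_eval_iff {x : X} {f : Mring X} : f ∈ RingHom.ker (eval x) ↔ x ∈ zset f :=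
  RingHom.mem_ker

theorem measurableSet_zset (f : Mring X) : MeasurableSet (zset f) :=
  f.2 (measurableSet_singleton 0)

noncomputable def zsetIndicator (f : Mring X) : Mring X :=
  ⟨(zset f).indicator 1, measurable_one.indicator (measurableSet_zset f)⟩

theorem mul_zsetIndicator (f : Mring X) : f * zsetIndicator f = 0 := by
  ext y
  change (f : X → ℝ) y * (zset f).indicator 1 y = 0
  by_cases hy : y ∈ zset f
  · rw [hy, zero_mul]
  · rw [indicator_of_notMem hy, mul_zero]

theorem zsetIndicator_apply_of_mem {f : Mring X} {x : X} (hx : x ∈ zset f) :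
    (zsetIndicator f : X → ℝ) x = 1 :=
  indicator_of_mem hx 1

theorem dvd_of_zset_subset {f g : Mring X} (h : zset f ⊆ zset g) : f ∣ g := by
  refine ⟨⟨(g : X → ℝ) / f, g.2.div f.2⟩, ?_⟩
  ext y
  change (g : X → ℝ) y = (f : X → ℝ) y * ((g : X → ℝ) y / (f : X → ℝ) y)
  by_cases hy : (f : X → ℝ) y = 0
  · rw [h hy, zero_div, mul_zero]
  · rw [mul_div_cancel₀ _ hy]

end Mring

open Mring in
/-- For `f, g ∈ M(X)` the following are equivalent:
(1) every maximal ideal of `M(X)` containing `f` also contains `g`;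
(2) `Z(f) ⊆ Z(g)`;
(3) `Ann(f) ⊆ Ann(g)`. -/
theorem stmt_5 {X : Type*} [MeasurableSpace X] (f g : Mring X) :
    List.TFAE
      [∀ M : Ideal (Mring X), M.IsMaximal → f ∈ M → g ∈ M,
       zset f ⊆ zset g,
       {h : Mring X | f * h = 0} ⊆ {h : Mring X | g * h = 0}] := by
  tfae_have 1 → 2 := fun h1 x hx =>
    mem_ker_eval_iff.1 (h1 _ (ker_eval_isMaximal x) (mem_ker_eval_iff.2 hx))
  tfae_have 2 → 1 := fun h2 M _ hfM => M.mem_of_dvd (dvd_of_zset_subset h2) hfM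
  tfae_have 2 → 3 := by
    intro h2 h (hfh : f * h = 0)
    obtain ⟨k, rfl⟩ := dvd_of_zset_subset h2
    change f * k * h = 0
    rw [mul_right_comm, hfh, zero_mul]
  tfae_have 3 → 2 := by
    intro h3 x hx
    change (g : X → ℝ) x = 0
    have hg : g * zsetIndicator f = 0 := h3 (mul_zsetIndicator f)
    simpa [zsetIndicator_apply_of_mem hx] using congrFun (congrArg Subtype.val hg) x
  tfae_finish
end

section
/- Let (X, 𝒜) be a measurable space. Every proper ideal of the ring M(X) is a Z°-ideal: if I is a proper ideal of M(X) and f ∈ I, then the intersection of all minimal prime ideals of M(X) containing f is contained in I. -/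
open Set

/-- Pointwise inverse of a measurable function (with `0⁻¹ = 0`). -/
noncomputable def Minv {X : Type*} [MeasurableSpace X] (a : Mring X) : Mring X :=
  ⟨fun x => ((a : X → ℝ) x)⁻¹, (a.2 : Measurable (a : X → ℝ)).inv⟩

lemma Minv_spec {X : Type*} [MeasurableSpace X] (a : Mring X) :
    a * Minv a * a = a := by
  ext x
  show (a : X → ℝ) x * ((a : X → ℝ) x)⁻¹ * (a : X → ℝ) x = (a : X → ℝ) x
  by_cases h : (a : X → ℝ) x = 0
  · simp [h]
  · field_simp

/-- Every prime ideal of `M(X)` is a minimal prime. -/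
lemma Mring.prime_minimal {X : Type*} [MeasurableSpace X] (P : Ideal (Mring X))
    (hP : P.IsPrime) : P ∈ minimalPrimes (Mring X) := by
  refine ⟨⟨hP, bot_le⟩, ?_⟩
  rintro Q ⟨hQ, -⟩ hQP a haP
  have key : a * (1 - a * Minv a) = 0 := by
    have := Minv_spec a
    ring_nf
    ring_nf at this
    linear_combination -this
  have h0 : a * (1 - a * Minv a) ∈ Q := by rw [key]; exact Q.zero_mem
  rcases hQ.mem_or_mem h0 with h | h
  · exact h
  · exfalso
    have h1 : (1 : Mring X) ∈ P := by
      have h2 : (1 - a * Minv a) ∈ P := hQP h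
      have h3 : a * Minv a ∈ P := P.mul_mem_right _ haP
      have := P.add_mem h2 h3
      simpa using this
    exact hP.ne_top (P.eq_top_iff_one.mpr h1)

/-- Every proper ideal of `M(X)` is a `Z°`-ideal: if `f ∈ I`, then the
intersection of all minimal prime ideals of `M(X)` containing `f` is
contained in `I`. -/
theorem stmt_6 {X : Type*} [MeasurableSpace X] (I : Ideal (Mring X)) (hI : I ≠ ⊤)
    (f : Mring X) (hf : f ∈ I) :
    sInf {P : Ideal (Mring X) | P ∈ minimalPrimes (Mring X) ∧ f ∈ P} ≤ I := by
  intro g hg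
  -- g lies in every prime containing f, hence in the radical of (f)
  have hrad : g ∈ (Ideal.span {f}).radical := by
    rw [Ideal.radical_eq_sInf]
    rw [Ideal.mem_sInf]
    rintro P ⟨hle, hPprime⟩
    have hfP : f ∈ P := hle (Ideal.subset_span rfl)
    exact (Ideal.mem_sInf.mp hg) ⟨Mring.prime_minimal P hPprime, hfP⟩
  obtain ⟨n, hn⟩ := hrad
  obtain ⟨a, ha⟩ := Ideal.mem_span_singleton'.mp hn
  -- g vanishes on the zero set of f
  have hz : ∀ x, (f : X → ℝ) x = 0 → (g : X → ℝ) x = 0 := by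
    intro x hx
    have : ((g : X → ℝ) x) ^ n = (a : X → ℝ) x * (f : X → ℝ) x := by
      have := congrFun (congrArg (Subtype.val) ha) x
      simpa using this.symm
    rw [hx, mul_zero] at this
    rcases Nat.eq_zero_or_pos n with rfl | hn0
    · simp at this
    · exact pow_eq_zero_iff hn0.ne' |>.mp this
  -- hence g = (g * f⁻¹) * f ∈ (f) ⊆ I
  have hgf : g = (g * Minv f) * f := by
    ext x
    show (g : X → ℝ) x = (g : X → ℝ) x * ((f : X → ℝ) x)⁻¹ * (f : X → ℝ) x
    by_cases h : (f : X → ℝ) x = 0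
    · simp [h, hz x h]
    · field_simp
  rw [hgf]
  exact I.mul_mem_left _ hf
end

section
/- Let (X, 𝒜) be a measurable space. Every ideal of the ring M(X) is a Z_𝒜-ideal: if I is an ideal of M(X), f ∈ I, g ∈ M(X), and Z(f) ⊆ Z(g), then g ∈ I. -/
open Set

/-- Every ideal of `M(X)` is a `Z_𝒜`-ideal: if `f ∈ I`, `g ∈ M(X)` and
`Z(f) ⊆ Z(g)`, then `g ∈ I`. -/
theorem stmt_7 {X : Type*} [MeasurableSpace X] (I : Ideal (Mring X))
    (f : Mring X) (hf : f ∈ I) (g : Mring X) (hfg : zset f ⊆ zset g) :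
    g ∈ I := by
  have hmeas : Measurable (fun x => (g : X → ℝ) x * ((f : X → ℝ) x)⁻¹) :=
    g.2.mul f.2.inv
  have : g = (⟨_, hmeas⟩ : Mring X) * f := by
    ext x
    simp only [Subring.coe_mul, Pi.mul_apply]
    by_cases h : (f : X → ℝ) x = 0
    · have : (g : X → ℝ) x = 0 := hfg h
      simp [this, h]
    · field_simp
  rw [this]
  exact I.mul_mem_left _ hf
end

section
/- Let (X, 𝒜) be a measurable space. For order ideals I and J of the lattice of measurable sets of X ordered by inclusion, M^I = M^J if and only if I = J. -/
open Set

/-- An order ideal of the lattice of measurable sets of `X` (ordered by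
inclusion): a nonempty collection of measurable sets closed under binary
unions and downward closed within measurable sets. -/
def IsLatIdeal {X : Type*} [MeasurableSpace X] (I : Set (Set X)) : Prop :=
  I.Nonempty ∧ (∀ A ∈ I, MeasurableSet A) ∧
    (∀ A ∈ I, ∀ B ∈ I, A ∪ B ∈ I) ∧
    (∀ B ∈ I, ∀ A : Set X, MeasurableSet A → A ⊆ B → A ∈ I)

lemma latIdeal_subset {X : Type*} [MeasurableSpace X] {I J : Set (Set X)}
    (hI : IsLatIdeal I)
    (h : {f : Mring X | coz f ∈ I} = {f : Mring X | coz f ∈ J}) : I ⊆ J := by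
  intro A hA
  have hAm := hI.2.1 A hA
  have hf : Measurable (A.indicator (1 : X → ℝ)) := measurable_one.indicator hAm
  let f : Mring X := ⟨A.indicator 1, hf⟩
  have hcoz : coz f = A := by
    ext x
    simp [coz, f, Set.indicator_apply]
  have : f ∈ {f : Mring X | coz f ∈ I} := by simpa [hcoz] using hA
  rw [h] at this
  simpa [hcoz] using this

/-- For order ideals `I`, `J` of the lattice of measurable sets,
`M^I = M^J` iff `I = J`, where `M^I = {f ∈ M(X) : coz(f) ∈ I}`. -/
theorem stmt_9 {X : Type*} [MeasurableSpace X] (I J : Set (Set X))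
    (hI : IsLatIdeal I) (hJ : IsLatIdeal J) :
    {f : Mring X | coz f ∈ I} = {f : Mring X | coz f ∈ J} ↔ I = J := by
  constructor
  · intro h
    exact Set.Subset.antisymm (latIdeal_subset hI h) (latIdeal_subset hJ h.symm)
  · intro h; rw [h]
end

section
/- Let (X, 𝒜) be a measurable space. A subset M of M(X) is a maximal ideal of the ring M(X) if and only if there exists a unique prime order ideal J of the lattice of measurable sets of X such that M = M^J. -/
open Set

/-- A prime order ideal of the lattice of measurable sets: a proper order
ideal (not containing `X`) such that whenever the intersection of two
measurable sets lies in it, one of them does. -/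
def IsPrimeLatIdeal {X : Type*} [MeasurableSpace X] (I : Set (Set X)) : Prop :=
  IsLatIdeal I ∧ Set.univ ∉ I ∧
    ∀ A B : Set X, MeasurableSet A → MeasurableSet B → A ∩ B ∈ I → A ∈ I ∨ B ∈ I

section Aux

variable {X : Type*} [MeasurableSpace X]

lemma mem_coz {f : Mring X} {x : X} : x ∈ coz f ↔ (f : X → ℝ) x ≠ 0 := Iff.rfl

lemma coz_measurable (f : Mring X) : MeasurableSet (coz f) := by
  have h : coz f = ((f : X → ℝ) ⁻¹' {0})ᶜ := by ext x; simp [coz]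
  rw [h]
  exact (f.2 (measurableSet_singleton 0)).compl

/-- Indicator function as an element of `Mring X`. -/
noncomputable def ind (A : Set X) (hA : MeasurableSet A) : Mring X :=
  ⟨A.indicator 1, measurable_one.indicator hA⟩

lemma ind_apply_mem (A : Set X) (hA : MeasurableSet A) {x : X} (h : x ∈ A) :
    (ind A hA : X → ℝ) x = 1 := by
  simp [ind, Set.indicator_of_mem h]

lemma ind_apply_not_mem (A : Set X) (hA : MeasurableSet A) {x : X} (h : x ∉ A) :
    (ind A hA : X → ℝ) x = 0 := by
  simp [ind, Set.indicator_of_notMem h]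

lemma coz_ind (A : Set X) (hA : MeasurableSet A) : coz (ind A hA) = A := by
  ext x
  by_cases h : x ∈ A
  · simp [mem_coz, ind_apply_mem A hA h, h]
  · simp [mem_coz, ind_apply_not_mem A hA h, h]

/-- Pointwise inverse as an element of `Mring X`. -/
noncomputable def pinv (f : Mring X) : Mring X :=
  ⟨fun x => ((f : X → ℝ) x)⁻¹, f.2.inv⟩

lemma mul_pinv_eq_ind (f : Mring X) :
    f * pinv f = ind (coz f) (coz_measurable f) := by
  apply Subtype.ext
  funext x
  show (f : X → ℝ) x * ((f : X → ℝ) x)⁻¹ = _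
  by_cases h : (f : X → ℝ) x = 0
  · rw [ind_apply_not_mem _ _ (by simp [mem_coz, h]), h, zero_mul]
  · rw [ind_apply_mem _ _ (by exact h), mul_inv_cancel₀ h]

lemma mul_ind_coz (f : Mring X) : f * ind (coz f) (coz_measurable f) = f := by
  apply Subtype.ext
  funext x
  show (f : X → ℝ) x * _ = (f : X → ℝ) x
  by_cases h : (f : X → ℝ) x = 0
  · rw [h, zero_mul]
  · rw [ind_apply_mem _ _ (by exact h), mul_one]

lemma ind_empty : ind (∅ : Set X) MeasurableSet.empty = 0 := by
  apply Subtype.ext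
  funext x
  simp [ind]

lemma ind_univ : ind (Set.univ : Set X) MeasurableSet.univ = 1 := by
  apply Subtype.ext
  funext x
  simp [ind]

lemma ind_mul (A B : Set X) (hA : MeasurableSet A) (hB : MeasurableSet B) :
    ind A hA * ind B hB = ind (A ∩ B) (hA.inter hB) := by
  apply Subtype.ext
  funext x
  show (ind A hA : X → ℝ) x * (ind B hB : X → ℝ) x = _
  by_cases h1 : x ∈ A <;> by_cases h2 : x ∈ B
  · rw [ind_apply_mem _ _ h1, ind_apply_mem _ _ h2,
      ind_apply_mem _ _ (Set.mem_inter h1 h2), one_mul]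
  · rw [ind_apply_not_mem _ _ h2,
      ind_apply_not_mem _ _ (fun h => h2 (Set.mem_of_mem_inter_right h)), mul_zero]
  · rw [ind_apply_not_mem _ _ h1,
      ind_apply_not_mem _ _ (fun h => h1 (Set.mem_of_mem_inter_left h)), zero_mul]
  · rw [ind_apply_not_mem _ _ h1,
      ind_apply_not_mem _ _ (fun h => h1 (Set.mem_of_mem_inter_left h)), zero_mul]

lemma ind_union (A B : Set X) (hA : MeasurableSet A) (hB : MeasurableSet B) :
    ind (A ∪ B) (hA.union hB) = ind A hA + ind B hB - ind A hA * ind B hB := by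
  apply Subtype.ext
  funext x
  show (ind (A ∪ B) _ : X → ℝ) x
      = (ind A hA : X → ℝ) x + (ind B hB : X → ℝ) x
        - (ind A hA : X → ℝ) x * (ind B hB : X → ℝ) x
  by_cases h1 : x ∈ A <;> by_cases h2 : x ∈ B
  · rw [ind_apply_mem _ _ h1, ind_apply_mem _ _ h2,
      ind_apply_mem _ _ (Set.mem_union_left _ h1)]; ring
  · rw [ind_apply_mem _ _ h1, ind_apply_not_mem _ _ h2,
      ind_apply_mem _ _ (Set.mem_union_left _ h1)]; ring
  · rw [ind_apply_not_mem _ _ h1, ind_apply_mem _ _ h2,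
      ind_apply_mem _ _ (Set.mem_union_right _ h2)]; ring
  · rw [ind_apply_not_mem _ _ h1, ind_apply_not_mem _ _ h2,
      ind_apply_not_mem _ _ (fun h => h.elim (fun ha => h1 ha) (fun hb => h2 hb))]; ring

lemma one_eq_split (f : Mring X) :
    (1 : Mring X) = f * pinv f + ind (coz f)ᶜ (coz_measurable f).compl := by
  apply Subtype.ext
  funext x
  show (1 : ℝ) = (f : X → ℝ) x * ((f : X → ℝ) x)⁻¹ + _
  by_cases h : (f : X → ℝ) x = 0
  · rw [ind_apply_mem _ _ (by simp [mem_coz, h] : x ∈ (coz f)ᶜ), h, zero_mul, zero_add]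
  · rw [ind_apply_not_mem _ _ (by simp [mem_coz, h] : x ∉ (coz f)ᶜ),
      mul_inv_cancel₀ h, add_zero]

lemma empty_mem_latIdeal {J : Set (Set X)} (hJ : IsLatIdeal J) : (∅ : Set X) ∈ J := by
  obtain ⟨A, hA⟩ := hJ.1
  exact hJ.2.2.2 A hA ∅ MeasurableSet.empty (Set.empty_subset A)

end Aux

/-- A subset `M` of `M(X)` is a maximal ideal iff there exists a unique prime
order ideal `J` of the lattice of measurable sets with `M = M^J`. -/
theorem stmt_10 {X : Type*} [MeasurableSpace X] (M : Set (Mring X)) :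
    (∃ I : Ideal (Mring X), I.IsMaximal ∧ (I : Set (Mring X)) = M) ↔
      ∃! J : Set (Set X), IsPrimeLatIdeal J ∧ M = {f : Mring X | coz f ∈ J} := by
  constructor
  · rintro ⟨I, hmax, rfl⟩
    set J : Set (Set X) := {A | ∃ hA : MeasurableSet A, ind A hA ∈ I} with hJdef
    have key : ∀ f : Mring X, f ∈ I ↔ coz f ∈ J := by
      intro f
      constructor
      · intro hf
        exact ⟨coz_measurable f, mul_pinv_eq_ind f ▸ I.mul_mem_right (pinv f) hf⟩
      · rintro ⟨hA, hind⟩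
        have := I.mul_mem_left f hind
        rwa [mul_ind_coz f] at this
    have hJprime : IsPrimeLatIdeal J := by
      refine ⟨⟨⟨∅, MeasurableSet.empty, by rw [ind_empty]; exact I.zero_mem⟩,
        fun A hA => hA.1, ?_, ?_⟩, ?_, ?_⟩
      · rintro A ⟨hA, hAi⟩ B ⟨hB, hBi⟩
        refine ⟨hA.union hB, ?_⟩
        rw [ind_union A B hA hB]
        exact I.sub_mem (I.add_mem hAi hBi) (I.mul_mem_left _ hBi)
      · rintro B ⟨hB, hBi⟩ A hA hAB
        refine ⟨hA, ?_⟩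
        have h : ind A hA * ind B hB = ind A hA := by
          rw [ind_mul]
          congr 1
          exact Set.inter_eq_left.mpr hAB
        rw [← h]
        exact I.mul_mem_left _ hBi
      · rintro ⟨hu, hui⟩
        rw [ind_univ] at hui
        exact hmax.ne_top (I.eq_top_iff_one.mpr hui)
      · rintro A B hA hB ⟨hAB, hABi⟩
        rw [← ind_mul A B hA hB] at hABi
        rcases hmax.isPrime.mem_or_mem hABi with h | h
        · exact Or.inl ⟨hA, h⟩
        · exact Or.inr ⟨hB, h⟩
    refine ⟨J, ⟨hJprime, ?_⟩, ?_⟩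
    · ext f
      exact key f
    · rintro J' ⟨hJ', hMJ'⟩
      ext A
      constructor
      · intro hA
        have hAm : MeasurableSet A := hJ'.1.2.1 A hA
        have : ind A hAm ∈ I := by
          have h2 : ind A hAm ∈ {f : Mring X | coz f ∈ J'} := by
            show coz (ind A hAm) ∈ J'
            rw [coz_ind]; exact hA
          rwa [← hMJ'] at h2
        exact ⟨hAm, this⟩
      · rintro ⟨hAm, hAi⟩
        have h2 : ind A hAm ∈ {f : Mring X | coz f ∈ J'} := by
          rw [← hMJ']; exact hAi
        have h3 : coz (ind A hAm) ∈ J' := h2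
        rwa [coz_ind] at h3
  · rintro ⟨J, ⟨hJ, hMJ⟩, -⟩
    have hempty : (∅ : Set X) ∈ J := empty_mem_latIdeal hJ.1
    set I : Ideal (Mring X) :=
      { carrier := {f : Mring X | coz f ∈ J}
        zero_mem' := by
          have : coz (0 : Mring X) = ∅ := by ext x; simp [mem_coz]
          show coz (0 : Mring X) ∈ J
          rw [this]; exact hempty
        add_mem' := by
          rintro f g hf hg
          refine hJ.1.2.2.2 (coz f ∪ coz g) (hJ.1.2.2.1 _ hf _ hg) _
            (coz_measurable _) ?_
          intro x hx
          by_contra h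
          simp only [Set.mem_union, mem_coz, not_or, not_not] at h
          have : (f : X → ℝ) x + (g : X → ℝ) x = 0 := by rw [h.1, h.2, add_zero]
          exact hx this
        smul_mem' := by
          rintro c f hf
          refine hJ.1.2.2.2 (coz f) hf _ (coz_measurable _) ?_
          intro x hx
          simp only [mem_coz] at hx ⊢
          intro h
          apply hx
          show (c : X → ℝ) x * (f : X → ℝ) x = 0
          rw [h, mul_zero] } with hIdef
    refine ⟨I, ?_, by rw [hMJ]; rfl⟩
    rw [Ideal.isMaximal_iff]
    constructor
    · show coz (1 : Mring X) ∉ J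
      have : coz (1 : Mring X) = Set.univ := by
        ext x
        simp only [mem_coz, Set.mem_univ, iff_true]
        show (1 : ℝ) ≠ 0
        norm_num
      rw [this]
      exact hJ.2.1
    · intro I' f hII' hfI hfI'
      have hcoz : coz f ∉ J := hfI
      have hcompl : (coz f)ᶜ ∈ J := by
        rcases hJ.2.2 (coz f) (coz f)ᶜ (coz_measurable f) (coz_measurable f).compl
            (by rw [Set.inter_compl_self]; exact hempty) with h | h
        · exact absurd h hcoz
        · exact h
      have hind : ind (coz f)ᶜ (coz_measurable f).compl ∈ I := by
        show coz (ind (coz f)ᶜ (coz_measurable f).compl) ∈ J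
        rw [coz_ind]
        exact hcompl
      rw [one_eq_split f]
      exact I'.add_mem (I'.mul_mem_right (pinv f) hfI') (hII' hind)
end

section
/- Let (X, 𝒜) be a measurable space. The following are equivalent: (1) (X, 𝒜) is a compact measurable space; (2) every proper ideal of the ring M(X) is fixed; (3) every maximal ideal of M(X) is fixed; (4) every Z_𝒜-filter on X has nonempty intersection; (5) every Z_𝒜-ultrafilter on X has nonempty intersection. -/
/-!
Zero-sets of measurable functions are exactly the measurable sets (`Z(1_{Aᶜ}) = A`), so ideals
of `M(X)` and `Z_𝒜`-filters correspond: a proper ideal `I` generates the filter of measurable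
supersets of its zero-sets, a filter `F` gives the ideal `{f | Z(f) ∈ F}`, and maximal ideals go
to ultrafilters. Compactness is the finite intersection property of measurable sets, i.e. every
`Z_𝒜`-filter is fixed.
-/

open Set

/-- A `Z_𝒜`-ultrafilter on `X`: a `Z_𝒜`-filter maximal with respect to
inclusion among all `Z_𝒜`-filters on `X`. -/
def IsZUltrafilter {X : Type*} [MeasurableSpace X] (F : Set (Set X)) : Prop :=
  IsZFilter F ∧ ∀ G : Set (Set X), IsZFilter G → F ⊆ G → G = F

/-- `(X, 𝒜)` is a compact measurable space: every cover of `X` by measurable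
sets admits a finite subcover. -/
def IsCompactMS (X : Type*) [MeasurableSpace X] : Prop :=
  ∀ B : Set (Set X), (∀ A ∈ B, MeasurableSet A) → ⋃₀ B = Set.univ →
    ∃ A : Set (Set X), A ⊆ B ∧ A.Finite ∧ ⋃₀ A = Set.univ

section

variable {X : Type*} [MeasurableSpace X]

lemma measurableSet_zset (f : Mring X) : MeasurableSet (zset f) :=
  f.2 (measurableSet_singleton 0)

lemma zset_zero : zset (0 : Mring X) = univ :=
  eq_univ_of_forall fun _ => rfl

lemma zset_one : zset (1 : Mring X) = ∅ :=
  eq_empty_of_forall_notMem fun _ => one_ne_zero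

lemma zset_mul (f g : Mring X) : zset (f * g) = zset f ∪ zset g :=
  ext fun _ => mul_eq_zero

lemma zset_inter_subset_zset_add (f g : Mring X) : zset f ∩ zset g ⊆ zset (f + g) :=
  fun x hx => show (f : X → ℝ) x + (g : X → ℝ) x = 0 by rw [hx.1, hx.2, add_zero]

lemma zset_mul_self_add_mul_self (f g : Mring X) :
    zset (f * f + g * g) = zset f ∩ zset g :=
  ext fun _ => add_eq_zero_iff_of_nonneg (mul_self_nonneg _) (mul_self_nonneg _) |>.trans
    (and_congr mul_self_eq_zero mul_self_eq_zero)

lemma exists_zset_eq {A : Set X} (hA : MeasurableSet A) : ∃ f : Mring X, zset f = A := by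
  refine ⟨⟨Aᶜ.indicator 1, measurable_one.indicator hA.compl⟩, ext fun x => ?_⟩
  by_cases hx : x ∈ A <;> simp [zset, hx]

lemma isUnit_of_zset_eq_empty {f : Mring X} (h : zset f = ∅) : IsUnit f := by
  have hf : ∀ x, (f : X → ℝ) x ≠ 0 := fun x hx => (h.subset hx : x ∈ (∅ : Set X))
  exact .of_mul_eq_one ⟨fun x => ((f : X → ℝ) x)⁻¹, f.2.inv⟩ (Subtype.ext <| funext fun x =>
    mul_inv_cancel₀ (hf x))

lemma zset_nonempty_of_mem {I : Ideal (Mring X)} (hI : I ≠ ⊤) {f : Mring X} (hf : f ∈ I) :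
    (zset f).Nonempty :=
  nonempty_iff_ne_empty.2 fun h => hI (I.eq_top_of_isUnit_mem hf (isUnit_of_zset_eq_empty h))

namespace IsZFilter

variable {F : Set (Set X)} (hF : IsZFilter F)
include hF

lemma univ_mem : univ ∈ F :=
  let ⟨A, hA⟩ := hF.1
  hF.2.2.2.2 A hA univ .univ (subset_univ A)

lemma sInter_mem {S : Set (Set X)} (hS : S.Finite) (hSF : S ⊆ F) : ⋂₀ S ∈ F := by
  induction S, hS using Set.Finite.induction_on with
  | empty => simpa using hF.univ_mem
  | @insert A S _ _ ih =>
    rw [sInter_insert]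
    exact hF.2.2.2.1 A (hSF (mem_insert A S)) _ (ih ((subset_insert A S).trans hSF))

end IsZFilter

def measurableUpperClosure (D : Set (Set X)) : Set (Set X) :=
  {S | MeasurableSet S ∧ ∃ A ∈ D, A ⊆ S}

lemma isZFilter_measurableUpperClosure {D : Set (Set X)} (hne : D.Nonempty) (hD : ∅ ∉ D)
    (hdir : DirectedOn (· ⊇ ·) D) : IsZFilter (measurableUpperClosure D) := by
  refine ⟨⟨univ, .univ, hne.some, hne.some_mem, subset_univ _⟩, fun S hS => hS.1, ?_, ?_, ?_⟩
  · rintro ⟨-, A, hA, hA0⟩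
    exact hD (subset_empty_iff.1 hA0 ▸ hA)
  · rintro S ⟨hSm, A, hA, hAS⟩ T ⟨hTm, B, hB, hBT⟩
    obtain ⟨C, hC, hCA, hCB⟩ := hdir A hA B hB
    exact ⟨hSm.inter hTm, C, hC, subset_inter (hCA.trans hAS) (hCB.trans hBT)⟩
  · rintro S ⟨-, A, hA, hAS⟩ T hTm hST
    exact ⟨hTm, A, hA, hAS.trans hST⟩

lemma IsCompactMS.sInter_nonempty (hX : IsCompactMS X) {F : Set (Set X)} (hF : IsZFilter F) :
    (⋂₀ F).Nonempty := by
  by_contra hempty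
  obtain ⟨A, hAF, hAfin, hAcov⟩ := hX (compl '' F)
    (by rintro _ ⟨S, hS, rfl⟩; exact (hF.2.1 S hS).compl)
    (by rw [sUnion_eq_compl_sInter_compl, compl_compl_image, not_nonempty_iff_eq_empty.1 hempty,
      compl_empty])
  have hAF' : compl '' A ⊆ F := by
    rintro _ ⟨_, hS, rfl⟩
    obtain ⟨S, hS, rfl⟩ := hAF hS
    rwa [compl_compl]
  have h0 := hF.sInter_mem (hAfin.image compl) hAF'
  rw [← compl_sUnion, hAcov, compl_univ] at h0
  exact hF.2.2.1 h0

-- An uncovered family `B` yields the filter generated by the complements of its finite unions.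
lemma isCompactMS_of_forall_isZFilter (h : ∀ F : Set (Set X), IsZFilter F → (⋂₀ F).Nonempty) :
    IsCompactMS X := by
  intro B hB hcov
  by_contra! hnc
  let D := (fun A : Set (Set X) => (⋃₀ A)ᶜ) '' {A | A ⊆ B ∧ A.Finite}
  have hF : IsZFilter (measurableUpperClosure D) := by
    refine isZFilter_measurableUpperClosure ⟨_, ∅, ⟨empty_subset B, finite_empty⟩, rfl⟩ ?_ ?_
    · rintro ⟨A, ⟨hAB, hAfin⟩, hA⟩
      exact hnc A hAB hAfin (compl_empty_iff.1 hA)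
    · rintro _ ⟨A₁, ⟨hA₁B, hA₁⟩, rfl⟩ _ ⟨A₂, ⟨hA₂B, hA₂⟩, rfl⟩
      refine ⟨_, ⟨A₁ ∪ A₂, ⟨union_subset hA₁B hA₂B, hA₁.union hA₂⟩, rfl⟩, ?_, ?_⟩ <;>
        simp only [sUnion_union, compl_union]
      exacts [inter_subset_left, inter_subset_right]
  obtain ⟨x, hx⟩ := h _ hF
  obtain ⟨T, hT, hxT⟩ := hcov.symm ▸ mem_univ x
  refine hx Tᶜ ⟨(hB T hT).compl, _, ⟨{T}, ⟨singleton_subset_iff.2 hT, finite_singleton T⟩, rfl⟩,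
    ?_⟩ hxT
  simp only [sUnion_singleton, subset_rfl]

def zFilter (I : Ideal (Mring X)) : Set (Set X) :=
  measurableUpperClosure (zset '' (I : Set (Mring X)))

lemma zset_mem_zFilter {I : Ideal (Mring X)} {f : Mring X} (hf : f ∈ I) : zset f ∈ zFilter I :=
  ⟨measurableSet_zset f, _, mem_image_of_mem _ hf, subset_rfl⟩

lemma sInter_zFilter_subset (I : Ideal (Mring X)) : ⋂₀ zFilter I ⊆ ⋂ f ∈ I, zset f :=
  subset_iInter₂ fun _ hf => sInter_subset_of_mem (zset_mem_zFilter hf)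

lemma isZFilter_zFilter {I : Ideal (Mring X)} (hI : I ≠ ⊤) : IsZFilter (zFilter I) := by
  refine isZFilter_measurableUpperClosure ⟨_, mem_image_of_mem _ I.zero_mem⟩ ?_ ?_
  · rintro ⟨f, hf, hf0⟩
    exact (zset_nonempty_of_mem hI hf).ne_empty hf0
  · rintro _ ⟨f, hf, rfl⟩ _ ⟨g, hg, rfl⟩
    refine ⟨_, mem_image_of_mem _ (I.add_mem (I.mul_mem_left f hf) (I.mul_mem_left g hg)), ?_⟩
    rw [zset_mul_self_add_mul_self]
    exact ⟨inter_subset_left, inter_subset_right⟩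

def zIdeal (F : Set (Set X)) (hF : IsZFilter F) : Ideal (Mring X) where
  carrier := {f | zset f ∈ F}
  zero_mem' := by simpa [zset_zero] using hF.univ_mem
  add_mem' {f g} hf hg :=
    hF.2.2.2.2 _ (hF.2.2.2.1 _ hf _ hg) _ (measurableSet_zset _) (zset_inter_subset_zset_add f g)
  smul_mem' c f hf :=
    hF.2.2.2.2 _ hf _ (measurableSet_zset _) ((zset_mul c f).symm ▸ subset_union_right)

lemma mem_zIdeal {F : Set (Set X)} {hF : IsZFilter F} {f : Mring X} :
    f ∈ zIdeal F hF ↔ zset f ∈ F :=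
  Iff.rfl

lemma zIdeal_ne_top {F : Set (Set X)} (hF : IsZFilter F) : zIdeal F hF ≠ ⊤ :=
  fun h => hF.2.2.1 (zset_one (X := X) ▸ mem_zIdeal.1 (h ▸ Submodule.mem_top : (1 : Mring X) ∈ _))

lemma biInter_zset_subset_sInter {F : Set (Set X)} (hF : IsZFilter F) {I : Ideal (Mring X)}
    (hI : zIdeal F hF ≤ I) : ⋂ f ∈ I, zset f ⊆ ⋂₀ F := by
  refine subset_sInter fun A hA => ?_
  obtain ⟨f, rfl⟩ := exists_zset_eq (hF.2.1 A hA)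
  exact biInter_subset_of_mem (hI (mem_zIdeal.2 hA))

lemma isZUltrafilter_zFilter {M : Ideal (Mring X)} (hM : M.IsMaximal) :
    IsZUltrafilter (zFilter M) := by
  refine ⟨isZFilter_zFilter hM.ne_top, fun G hG hMG => (subset_antisymm ?_ hMG)⟩
  have hGM : zIdeal G hG = M :=
    (hM.eq_of_le (zIdeal_ne_top hG) fun f hf => hMG (zset_mem_zFilter hf)).symm
  intro A hA
  obtain ⟨f, rfl⟩ := exists_zset_eq (hG.2.1 A hA)
  exact zset_mem_zFilter (hGM ▸ mem_zIdeal.2 hA)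

end

/-- The following are equivalent: (1) `(X, 𝒜)` is compact; (2) every proper
ideal of `M(X)` is fixed; (3) every maximal ideal of `M(X)` is fixed;
(4) every `Z_𝒜`-filter on `X` is fixed; (5) every `Z_𝒜`-ultrafilter on `X`
is fixed. -/
theorem stmt_14 {X : Type*} [MeasurableSpace X] :
    List.TFAE
      [IsCompactMS X,
       ∀ I : Ideal (Mring X), I ≠ ⊤ → (⋂ f ∈ I, zset f).Nonempty,
       ∀ M : Ideal (Mring X), M.IsMaximal → (⋂ f ∈ M, zset f).Nonempty,
       ∀ F : Set (Set X), IsZFilter F → (⋂₀ F).Nonempty,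
       ∀ F : Set (Set X), IsZUltrafilter F → (⋂₀ F).Nonempty] := by
  tfae_have 1 → 4 := fun hX _ hF => hX.sInter_nonempty hF
  tfae_have 4 → 1 := isCompactMS_of_forall_isZFilter
  tfae_have 4 → 2 := fun h I hI => (h _ (isZFilter_zFilter hI)).mono (sInter_zFilter_subset I)
  tfae_have 2 → 3 := fun h M hM => h M hM.ne_top
  tfae_have 3 → 4 := fun h F hF => by
    obtain ⟨M, hM, hFM⟩ := Ideal.exists_le_maximal _ (zIdeal_ne_top hF)
    exact (h M hM).mono (biInter_zset_subset_sInter hF hFM)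
  tfae_have 4 → 5 := fun h F hF => h F hF.1
  tfae_have 5 → 3 := fun h M hM =>
    (h _ (isZUltrafilter_zFilter hM)).mono (sInter_zFilter_subset M)
  tfae_finish
end

section
/- For every measurable space (X, 𝒜) there exist a measurable space (Y, 𝒜′) whose measurable sets separate points and a surjective map θ : X → Y such that: the map η : M(Y) → M(X) given by g ↦ g ∘ θ is a ring isomorphism; the image θ(A) of every measurable set A of X is measurable in Y; and the preimage θ⁻¹(B) of every measurable set B of Y is measurable in X. -/
open Set

universe u

/-- For every measurable space `(X, 𝒜)` there exist a measurable space
`(Y, 𝒜′)` whose measurable sets separate points and a surjection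
`θ : X → Y` such that `g ↦ g ∘ θ` is a ring isomorphism `M(Y) ≃ M(X)`,
images under `θ` of measurable sets are measurable, and preimages under `θ`
of measurable sets are measurable. -/
theorem stmt_15 {X : Type u} [MeasurableSpace X] :
    ∃ (Y : Type u) (mY : MeasurableSpace Y) (θ : X → Y),
      Function.Surjective θ ∧
      @MeasurableSpace.SeparatesPoints Y mY ∧
      (∃ η : (@Mring Y mY) ≃+* Mring X,
        ∀ g : @Mring Y mY, (η g : X → ℝ) = (g : Y → ℝ) ∘ θ) ∧
      (∀ A : Set X, MeasurableSet A → @MeasurableSet Y mY (θ '' A)) ∧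
      (∀ B : Set Y, @MeasurableSet Y mY B → MeasurableSet (θ ⁻¹' B)) := by
  classical
  letI m := ‹MeasurableSpace X›
  let r : Setoid X := ⟨fun x y => ∀ A : Set X, MeasurableSet A → (x ∈ A ↔ y ∈ A),
    ⟨fun _ _ _ => Iff.rfl, fun h A hA => (h A hA).symm,
     fun h1 h2 A hA => (h1 A hA).trans (h2 A hA)⟩⟩
  let Y := Quotient r
  let θ : X → Y := Quotient.mk r
  let mY : MeasurableSpace Y := MeasurableSpace.map θ m
  have hθsurj : Function.Surjective θ := Quotient.mk''_surjective
  -- saturation of measurable sets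
  have hsat : ∀ A : Set X, MeasurableSet A → θ ⁻¹' (θ '' A) = A := by
    intro A hA
    ext x
    constructor
    · rintro ⟨a, haA, hax⟩
      exact ((Quotient.exact hax) A hA).mp haA
    · exact fun hx => ⟨x, hx, rfl⟩
  have himg : ∀ A : Set X, MeasurableSet A → @MeasurableSet Y mY (θ '' A) := by
    intro A hA
    show MeasurableSet (θ ⁻¹' (θ '' A))
    rw [hsat A hA]; exact hA
  have hθmeas : @Measurable X Y m mY θ := fun _ hs => hs
  -- separates points
  have hsep : @MeasurableSpace.SeparatesPoints Y mY := by
    constructor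
    intro p q h
    obtain ⟨x, rfl⟩ := hθsurj p
    obtain ⟨y, rfl⟩ := hθsurj q
    refine Quotient.sound ?_
    intro A hA
    constructor
    · intro hx
      have := h (θ '' A) (himg A hA) ⟨x, hx, rfl⟩
      rw [← hsat A hA]; exact this
    · intro hy
      have := h (θ '' Aᶜ) (himg Aᶜ hA.compl)
      by_contra hx
      have hyC : θ y ∈ θ '' Aᶜ := this ⟨x, hx, rfl⟩
      have : y ∈ Aᶜ := by rw [← hsat Aᶜ hA.compl]; exact hyC
      exact this hy
  -- constancy of measurable functions on classes
  have hconst : ∀ f : Mring X, ∀ x y : X, r.r x y → (f : X → ℝ) x = (f : X → ℝ) y := by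
    intro f x y hxy
    have hA : MeasurableSet ((f : X → ℝ) ⁻¹' {(f : X → ℝ) x}) :=
      f.2 (measurableSet_singleton _)
    have := (hxy _ hA).mp (by simp : x ∈ (f : X → ℝ) ⁻¹' {(f : X → ℝ) x})
    simpa using this.symm
  -- the inverse map
  let lift : Mring X → (Y → ℝ) := fun f => Quotient.lift (f : X → ℝ) (hconst f)
  have hliftmeas : ∀ f : Mring X, @Measurable Y ℝ mY _ (lift f) := by
    intro f s hs
    show MeasurableSet (θ ⁻¹' (lift f ⁻¹' s))
    have : θ ⁻¹' (lift f ⁻¹' s) = (f : X → ℝ) ⁻¹' s := rfl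
    rw [this]; exact f.2 hs
  have hcomp : ∀ f : Mring X, (lift f) ∘ θ = (f : X → ℝ) := fun f => rfl
  let η : (@Mring Y mY) ≃+* Mring X :=
    { toFun := fun g => ⟨(g : Y → ℝ) ∘ θ, (g.2.comp hθmeas : Measurable _)⟩
      invFun := fun f => ⟨lift f, hliftmeas f⟩
      left_inv := by
        intro g
        apply Subtype.ext
        funext q
        obtain ⟨x, rfl⟩ := hθsurj q
        rfl
      right_inv := by intro f; apply Subtype.ext; rfl
      map_mul' := by intro a b; apply Subtype.ext; rfl
      map_add' := by intro a b; apply Subtype.ext; rfl }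
  exact ⟨Y, mY, θ, hθsurj, hsep, ⟨η, fun g => rfl⟩, himg, fun B hB => hB⟩
end

section
/- Let (X, 𝒜) be a measurable space. The following are equivalent: (1) (X, 𝒜) is T-measurable, i.e., the measurable sets separate points; (2) for all distinct points x, y ∈ X, M_x ≠ M_y; (3) for every maximal ideal M of M(X), the set ⋂_{f ∈ M} Z(f) has at most one element. -/
open Set

/-- Evaluation at a point, as a ring hom. -/
def evHom {X : Type*} [MeasurableSpace X] (x : X) : Mring X →+* ℝ where
  toFun f := (f : X → ℝ) x
  map_one' := rfl
  map_mul' _ _ := rfl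
  map_zero' := rfl
  map_add' _ _ := rfl

lemma evHom_surj {X : Type*} [MeasurableSpace X] (x : X) :
    Function.Surjective (evHom (X := X) x) := fun r =>
  ⟨⟨fun _ => r, measurable_const⟩, rfl⟩

lemma ker_ev_maximal {X : Type*} [MeasurableSpace X] (x : X) :
    (RingHom.ker (evHom (X := X) x)).IsMaximal :=
  RingHom.ker_isMaximal_of_surjective _ (evHom_surj x)

lemma ker_ev_carrier {X : Type*} [MeasurableSpace X] (x : X) :
    (RingHom.ker (evHom (X := X) x) : Set (Mring X)) = {f : Mring X | (f : X → ℝ) x = 0} := by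
  ext f; simp [RingHom.mem_ker, evHom]

/-- The following are equivalent: (1) the measurable sets of `X` separate
points; (2) distinct points `x, y` give distinct sets
`M_x = {f ∈ M(X) : f(x) = 0}` and `M_y`; (3) for every maximal ideal `M` of
`M(X)`, the set `⋂_{f ∈ M} Z(f)` has at most one element. -/
theorem stmt_16 {X : Type*} [MeasurableSpace X] :
    List.TFAE
      [MeasurableSpace.SeparatesPoints X,
       ∀ x y : X, x ≠ y →
         {f : Mring X | (f : X → ℝ) x = 0} ≠ {f : Mring X | (f : X → ℝ) y = 0},
       ∀ M : Ideal (Mring X), M.IsMaximal → (⋂ f ∈ M, zset f).Subsingleton] := by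
  tfae_have 1 → 2 := by
    intro h x y hxy heq
    obtain ⟨s, hs, hxs, hys⟩ := MeasurableSpace.exists_measurableSet_of_ne hxy
    have hf : Measurable (s.indicator (fun _ => (1:ℝ))) := measurable_const.indicator hs
    set f : Mring X := ⟨_, hf⟩ with hfdef
    have hy : f ∈ {f : Mring X | (f : X → ℝ) y = 0} := by
      simp [hfdef, Set.indicator_of_notMem hys]
    rw [← heq] at hy
    simp [hfdef, Set.indicator_of_mem hxs] at hy

  tfae_have 2 → 1 := by
    intro h
    rw [MeasurableSpace.separatesPoints_iff]
    intro x y hxy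
    by_contra hne
    apply h x y hne
    ext f
    have hm : MeasurableSet ((f : X → ℝ) ⁻¹' {(f:X → ℝ) x}) :=
      f.2 (measurableSet_singleton _)
    have := (hxy _ hm).mp rfl
    simp only [Set.mem_preimage, Set.mem_singleton_iff] at this
    simp [Set.mem_setOf_eq, ← this]
  tfae_have 2 → 3 := by
    intro h M hM x hx y hy
    by_contra hxy
    have key : ∀ z : X, z ∈ ⋂ f ∈ M, zset f →
        (RingHom.ker (evHom (X := X) z)) = M := by
      intro z hz
      refine (hM.eq_of_le (ker_ev_maximal z).ne_top ?_).symm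
      intro f hf
      have := Set.mem_iInter₂.mp hz f hf
      simpa [RingHom.mem_ker, evHom, zset] using this
    apply h x y hxy
    rw [← ker_ev_carrier x, ← ker_ev_carrier y, key x hx, key y hy]
  tfae_have 3 → 2 := by
    intro h x y hxy heq
    apply hxy
    refine h (RingHom.ker (evHom (X := X) x)) (ker_ev_maximal x) ?_ ?_
    · refine Set.mem_iInter₂.mpr fun f hf => ?_
      simpa [zset, evHom, RingHom.mem_ker] using hf
    · refine Set.mem_iInter₂.mpr fun f hf => ?_
      have : f ∈ {f : Mring X | (f : X → ℝ) x = 0} := by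
        simpa [RingHom.mem_ker, evHom] using hf
      rw [heq] at this
      exact this
  tfae_finish
end

section
/- Let (X, 𝒜) be a measurable space. Every prime ideal of the ring M(X) is contained in a unique maximal ideal of M(X); that is, M(X) is a Gelfand ring. -/
open Set

/-- `M(X)` is von Neumann regular. -/
lemma Mring_vnr {X : Type*} [MeasurableSpace X] (f : Mring X) :
    ∃ g : Mring X, f * g * f = f := by
  refine ⟨⟨fun x => ((f : X → ℝ) x)⁻¹, f.2.inv⟩, ?_⟩
  ext x
  show (f : X → ℝ) x * ((f : X → ℝ) x)⁻¹ * (f : X → ℝ) x = (f : X → ℝ) x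
  rcases eq_or_ne ((f : X → ℝ) x) 0 with h | h <;> simp [h]

lemma Mring_prime_max {X : Type*} [MeasurableSpace X] (P : Ideal (Mring X))
    (hP : P.IsPrime) : P.IsMaximal := by
  rw [Ideal.isMaximal_iff]
  refine ⟨fun h => hP.ne_top (Ideal.eq_top_iff_one P |>.mpr h), ?_⟩
  intro J x hPJ hxP hxJ
  obtain ⟨g, hg⟩ := Mring_vnr x
  have h0 : x * (g * x - 1) ∈ P := by
    have : x * (g * x - 1) = 0 := by ring_nf; linear_combination hg
    rw [this]; exact P.zero_mem
  have := (hP.mem_or_mem h0).resolve_left hxP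
  have h1 : g * x - (g * x - 1) ∈ J := J.sub_mem (J.mul_mem_left g hxJ) (hPJ this)
  simpa using h1

/-- Every prime ideal of `M(X)` is contained in a unique maximal ideal of
`M(X)`; that is, `M(X)` is a Gelfand ring. -/
theorem stmt_17 {X : Type*} [MeasurableSpace X] (P : Ideal (Mring X)) (hP : P.IsPrime) :
    ∃! M : Ideal (Mring X), M.IsMaximal ∧ P ≤ M := by
  have hmax := Mring_prime_max P hP
  exact ⟨P, ⟨hmax, le_rfl⟩, fun M ⟨hM, hle⟩ => (hmax.eq_of_le hM.ne_top hle).symm⟩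
end

section
/- Let (X, 𝒜) be a measurable space. Then (X, 𝒜) is T-measurable (the measurable sets separate points) if and only if for every prime ideal P of the ring M(X), the set ⋂_{f ∈ P} Z(f) has at most one element. -/
open Set

/-- `(X, 𝒜)` is `T`-measurable (the measurable sets separate points) iff for
every prime ideal `P` of `M(X)`, the set `⋂_{f ∈ P} Z(f)` has at most one
element. -/
theorem stmt_18 {X : Type*} [MeasurableSpace X] :
    MeasurableSpace.SeparatesPoints X ↔
      ∀ P : Ideal (Mring X), P.IsPrime → (⋂ f ∈ P, zset f).Subsingleton := by
  constructor
  · intro hsep P hP x hx y hy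
    by_contra hxy
    obtain ⟨s, hs, hxs, hys⟩ := MeasurableSpace.exists_measurableSet_of_ne hxy
    set f : Mring X := ⟨s.indicator 1, (measurable_one.indicator hs : _)⟩ with hf
    set g : Mring X := ⟨sᶜ.indicator 1, (measurable_one.indicator hs.compl : _)⟩ with hg
    have hfg : f * g = 0 := by
      apply Subtype.ext
      funext z
      simp only [MulMemClass.coe_mul, ZeroMemClass.coe_zero, Pi.mul_apply, Pi.zero_apply]
      show s.indicator 1 z * sᶜ.indicator 1 z = 0
      by_cases hz : z ∈ s
      · simp [Set.indicator_of_notMem (by simpa using hz : z ∉ sᶜ)]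
      · simp [Set.indicator_of_notMem hz]
    have hmem : f * g ∈ P := by rw [hfg]; exact P.zero_mem
    rcases hP.mem_or_mem hmem with h | h
    · have := Set.mem_iInter₂.1 hx f
      have hfx : (f : X → ℝ) x = 0 := this h
      simp [hf, Set.indicator_of_mem hxs] at hfx
    · have := Set.mem_iInter₂.1 hy g
      have hgy : (g : X → ℝ) y = 0 := this h
      simp [hg, Set.indicator_of_mem (by simpa using hys : y ∈ sᶜ)] at hgy
  · intro h
    constructor
    intro x y hxy
    set φ : Mring X →+* ℝ := (Pi.evalRingHom (fun _ => ℝ) x).comp (Mring X).subtype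
    have hker : (RingHom.ker φ).IsPrime := RingHom.ker_isPrime φ
    refine h _ hker ?_ ?_
    · exact Set.mem_iInter₂.2 fun f hf => hf
    · refine Set.mem_iInter₂.2 fun f hf => ?_
      have hfx : (f : X → ℝ) x = 0 := hf
      -- y is in every measurable set containing x; preimage of {0} under f
      have hsm : MeasurableSet ((f : X → ℝ) ⁻¹' {0}) := f.2 (measurableSet_singleton 0)
      exact hxy _ hsm hfx
end
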